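/- arXiv:1005.4456 — 2 statements merged into one kernel-verified Lean document; each statement's English description precedes it below -/
import Mathlib

section
/- The conditional variance of a standard normal variable above a threshold, Var[X | X > μ] = 1 + μ n(μ)/(1 − N(μ)) − n(μ)²/(1 − N(μ))², tends to 0 as μ → ∞. -/
open MeasureTheory Real Set Filter

/-- The standard normal density. -/
noncomputable def stdNormalPDF (x : ℝ) : ℝ :=
  (1 / Real.sqrt (2 * π)) * Real.exp (-x ^ 2 / 2)

/-- The standard normal cdf. -/
noncomputable def stdNormalCDF (μ : ℝ) : ℝ :=
  ∫ x in Iic μ, stdNormalPDF x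

namespace NCVAux

/-- The upper tail. -/
noncomputable def T (μ : ℝ) : ℝ := ∫ x in Ioi μ, stdNormalPDF x

lemma pdf_pos (x : ℝ) : 0 < stdNormalPDF x := by
  unfold stdNormalPDF
  have : (0:ℝ) < π := Real.pi_pos
  positivity

lemma pdf_cont : Continuous stdNormalPDF := by
  unfold stdNormalPDF
  fun_prop

lemma pdf_integrable : Integrable stdNormalPDF := by
  have h : Integrable (fun x : ℝ => Real.exp (-(1/2 : ℝ) * x ^ 2)) :=
    integrable_exp_neg_mul_sq (by norm_num)
  have h2 := h.const_mul (1 / Real.sqrt (2 * π))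
  apply h2.congr
  filter_upwards with x
  unfold stdNormalPDF
  ring_nf

lemma pdf_integral : ∫ x : ℝ, stdNormalPDF x = 1 := by
  have h := integral_gaussian (1/2 : ℝ)
  have h2 : ∫ x : ℝ, stdNormalPDF x
      = (1 / Real.sqrt (2 * π)) * ∫ x : ℝ, Real.exp (-(1/2:ℝ) * x ^ 2) := by
    rw [← integral_const_mul]
    congr 1 with x
    unfold stdNormalPDF
    ring_nf
  rw [h2, h]
  have h3 : π / (1/2 : ℝ) = 2 * π := by ring
  rw [h3]
  have hpos : (0:ℝ) < Real.sqrt (2 * π) := Real.sqrt_pos.2 (by positivity)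
  field_simp

lemma one_sub_cdf (μ : ℝ) : 1 - stdNormalCDF μ = T μ := by
  have h := integral_add_compl (measurableSet_Iic (a := μ)) pdf_integrable
  rw [compl_Iic] at h
  have h1 : stdNormalCDF μ + T μ = 1 := by
    rw [← pdf_integral]; exact h
  linarith

lemma T_eq (μ : ℝ) (hμ : 0 ≤ μ) : T μ = T 0 - ∫ x in (0:ℝ)..μ, stdNormalPDF x := by
  have hU : Ioc (0:ℝ) μ ∪ Ioi μ = Ioi 0 := Ioc_union_Ioi_eq_Ioi hμ
  have hdisj : Disjoint (Ioc (0:ℝ) μ) (Ioi μ) := by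
    simp only [Set.disjoint_left, mem_Ioc, mem_Ioi, not_lt]
    intro a ha
    exact ha.2
  have h := setIntegral_union hdisj measurableSet_Ioi
    (pdf_integrable.integrableOn) (pdf_integrable.integrableOn) (f := stdNormalPDF)
  rw [hU] at h
  rw [intervalIntegral.integral_of_le hμ]
  unfold T
  linarith

lemma T_tendsto : Tendsto T atTop (nhds 0) := by
  have h1 : Tendsto (fun μ : ℝ => ∫ x in (0:ℝ)..μ, stdNormalPDF x) atTop (nhds (T 0)) :=
    intervalIntegral_tendsto_integral_Ioi 0 pdf_integrable.integrableOn tendsto_id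
  have h2 : Tendsto (fun μ : ℝ => T 0 - ∫ x in (0:ℝ)..μ, stdNormalPDF x) atTop
      (nhds (T 0 - T 0)) := (tendsto_const_nhds).sub h1
  rw [sub_self] at h2
  apply h2.congr'
  filter_upwards [eventually_ge_atTop (0:ℝ)] with μ hμ
  exact (T_eq μ hμ).symm

lemma T_hasDeriv (μ : ℝ) (hμ : 0 < μ) : HasDerivAt T (-(stdNormalPDF μ)) μ := by
  have h : HasDerivAt (fun ν => T 0 - ∫ x in (0:ℝ)..ν, stdNormalPDF x)
      (-(stdNormalPDF μ)) μ := by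
    have h0 := intervalIntegral.integral_hasDerivAt_right
      (pdf_integrable.intervalIntegrable (a := 0) (b := μ))
      (pdf_cont.stronglyMeasurable.stronglyMeasurableAtFilter)
      pdf_cont.continuousAt
    have h1 := (hasDerivAt_const μ (T 0)).sub h0
    rw [zero_sub] at h1
    exact h1
  apply h.congr_of_eventuallyEq
  filter_upwards [eventually_nhds_iff.2 ⟨Ioi 0, fun y hy => hy, isOpen_Ioi, hμ⟩] with ν hν
  exact T_eq ν (le_of_lt hν)

lemma pdf_hasDeriv (x : ℝ) : HasDerivAt stdNormalPDF (-x * stdNormalPDF x) x := by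
  have h1 : HasDerivAt (fun y : ℝ => -y ^ 2 / 2) (-x) x := by
    have h0 := ((hasDerivAt_pow 2 x).neg).div_const 2
    refine h0.congr_deriv ?_
    push_cast
    ring
  have h2 := (h1.exp).const_mul (1 / Real.sqrt (2 * π))
  unfold stdNormalPDF
  refine h2.congr_deriv ?_
  ring

/-- If f has nonpositive derivative on `Ici a` and tends to 0 at infinity, then `0 ≤ f a`. -/
lemma nonneg_of_antitone {f f' : ℝ → ℝ} {a : ℝ}
    (hd : ∀ x ∈ Ici a, HasDerivAt f (f' x) x)
    (hneg : ∀ x ∈ Ici a, f' x ≤ 0)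
    (hlim : Tendsto f atTop (nhds 0)) : 0 ≤ f a := by
  have anti : AntitoneOn f (Ici a) := by
    apply antitoneOn_of_deriv_nonpos (convex_Ici a)
    · exact fun x hx => (hd x hx).continuousAt.continuousWithinAt
    · intro x hx
      rw [interior_Ici] at hx
      exact (hd x (Ioi_subset_Ici_self hx)).differentiableAt.differentiableWithinAt
    · intro x hx
      rw [interior_Ici] at hx
      rw [(hd x (Ioi_subset_Ici_self hx)).deriv]
      exact hneg x (Ioi_subset_Ici_self hx)
  refine le_of_tendsto hlim ?_
  filter_upwards [eventually_ge_atTop a] with ν hν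
  exact anti (self_mem_Ici) hν hν

lemma pdf_tendsto_zero : Tendsto stdNormalPDF atTop (nhds 0) := by
  have h1 : Tendsto (fun x : ℝ => -x ^ 2 / 2) atTop atBot := by
    apply Filter.Tendsto.atBot_div_const (by norm_num : (0:ℝ) < 2)
    exact tendsto_neg_atBot_iff.2 (tendsto_pow_atTop (by norm_num))
  have h2 : Tendsto (fun x : ℝ => Real.exp (-x ^ 2 / 2)) atTop (nhds 0) :=
    Real.tendsto_exp_atBot.comp h1
  have h3 := h2.const_mul (1 / Real.sqrt (2 * π))
  rw [mul_zero] at h3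
  exact h3

lemma low_tendsto_zero :
    Tendsto (fun x : ℝ => stdNormalPDF x * (x / (x ^ 2 + 1))) atTop (nhds 0) := by
  apply tendsto_of_tendsto_of_tendsto_of_le_of_le' tendsto_const_nhds pdf_tendsto_zero
  · filter_upwards [eventually_ge_atTop (0:ℝ)] with x hx
    have := pdf_pos x
    positivity
  · filter_upwards [eventually_ge_atTop (0:ℝ)] with x hx
    have hn := pdf_pos x
    have h1 : x / (x ^ 2 + 1) ≤ 1 := by
      rw [div_le_one (by positivity)]
      nlinarith
    nlinarith

lemma up_tendsto_zero :
    Tendsto (fun x : ℝ => stdNormalPDF x * ((x ^ 2 + 2) / (x ^ 3 + 3 * x))) atTop (nhds 0) := by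
  apply tendsto_of_tendsto_of_tendsto_of_le_of_le' tendsto_const_nhds pdf_tendsto_zero
  · filter_upwards [eventually_ge_atTop (1:ℝ)] with x hx
    have := pdf_pos x
    have h0 : (0:ℝ) < x := by linarith
    positivity
  · filter_upwards [eventually_ge_atTop (1:ℝ)] with x hx
    have hn := pdf_pos x
    have h0 : (0:ℝ) < x := by linarith
    have h1 : (x ^ 2 + 2) / (x ^ 3 + 3 * x) ≤ 1 := by
      rw [div_le_one (by positivity)]
      nlinarith
    nlinarith

lemma T_lower (μ : ℝ) (hμ : 0 < μ) : stdNormalPDF μ * (μ / (μ ^ 2 + 1)) ≤ T μ := by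
  have key : 0 ≤ (fun x => T x - stdNormalPDF x * (x / (x ^ 2 + 1))) μ := by
    apply nonneg_of_antitone (a := μ) (f' := fun x =>
      -(stdNormalPDF x) - ((-x * stdNormalPDF x) * (x / (x ^ 2 + 1)) +
        stdNormalPDF x * ((1 * (x ^ 2 + 1) - x * (2 * x)) / ((x ^ 2 + 1) ^ 2))))
    · intro x hx
      have hx0 : 0 < x := lt_of_lt_of_le hμ hx
      have hden : (x:ℝ) ^ 2 + 1 ≠ 0 := by positivity
      have hu : HasDerivAt (fun y : ℝ => y / (y ^ 2 + 1))
          ((1 * (x ^ 2 + 1) - x * (2 * x)) / ((x ^ 2 + 1) ^ 2)) x := by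
        have h0 := (hasDerivAt_id' (x := x)).div (((hasDerivAt_pow 2 x)).add_const 1) hden
        refine h0.congr_deriv ?_
        norm_num
      exact (T_hasDeriv x hx0).sub ((pdf_hasDeriv x).mul hu)
    · intro x hx
      have hn := pdf_pos x
      have e : -(stdNormalPDF x) - ((-x * stdNormalPDF x) * (x / (x ^ 2 + 1)) +
          stdNormalPDF x * ((1 * (x ^ 2 + 1) - x * (2 * x)) / ((x ^ 2 + 1) ^ 2)))
          = -2 * stdNormalPDF x / ((x ^ 2 + 1) ^ 2) := by
        have hden : (x:ℝ) ^ 2 + 1 ≠ 0 := by positivity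
        field_simp
        ring
      rw [e]
      apply div_nonpos_of_nonpos_of_nonneg (by nlinarith) (by positivity)
    · exact T_tendsto.sub low_tendsto_zero |>.congr (by intro x; rfl) |>.mono_right (by simp)
  simpa using key

lemma T_upper (μ : ℝ) (hμ : 0 < μ) :
    T μ ≤ stdNormalPDF μ * ((μ ^ 2 + 2) / (μ ^ 3 + 3 * μ)) := by
  have key : 0 ≤ (fun x => stdNormalPDF x * ((x ^ 2 + 2) / (x ^ 3 + 3 * x)) - T x) μ := by
    apply nonneg_of_antitone (a := μ) (f' := fun x =>
      ((-x * stdNormalPDF x) * ((x ^ 2 + 2) / (x ^ 3 + 3 * x)) +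
        stdNormalPDF x * ((2 * x * (x ^ 3 + 3 * x) - (x ^ 2 + 2) * (3 * x ^ 2 + 3)) /
          ((x ^ 3 + 3 * x) ^ 2))) - (-(stdNormalPDF x)))
    · intro x hx
      have hx0 : 0 < x := lt_of_lt_of_le hμ hx
      have hden : (x:ℝ) ^ 3 + 3 * x ≠ 0 := by positivity
      have hnum : HasDerivAt (fun y : ℝ => y ^ 2 + 2) (2 * x) x := by
        have h0 := (hasDerivAt_pow 2 x).add_const 2
        refine h0.congr_deriv ?_
        norm_num
      have hden' : HasDerivAt (fun y : ℝ => y ^ 3 + 3 * y) (3 * x ^ 2 + 3) x := by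
        have h0 := (hasDerivAt_pow 3 x).add ((hasDerivAt_id' (x := x)).const_mul 3)
        refine h0.congr_deriv ?_
        push_cast
        ring
      have hu := hnum.div hden' hden
      exact ((pdf_hasDeriv x).mul hu).sub (T_hasDeriv x hx0)
    · intro x hx
      have hx0 : 0 < x := lt_of_lt_of_le hμ hx
      have hn := pdf_pos x
      have hden : (0:ℝ) < x ^ 3 + 3 * x := by positivity
      have e : ((-x * stdNormalPDF x) * ((x ^ 2 + 2) / (x ^ 3 + 3 * x)) +
          stdNormalPDF x * ((2 * x * (x ^ 3 + 3 * x) - (x ^ 2 + 2) * (3 * x ^ 2 + 3)) /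
            ((x ^ 3 + 3 * x) ^ 2))) - (-(stdNormalPDF x))
          = -6 * stdNormalPDF x / ((x ^ 3 + 3 * x) ^ 2) := by
        field_simp
        ring
      rw [e]
      apply div_nonpos_of_nonpos_of_nonneg (by nlinarith) (by positivity)
    · exact up_tendsto_zero.sub T_tendsto |>.mono_right (by simp)
  simpa using key


lemma main_bounds (μ : ℝ) (hμ : 1 ≤ μ) :
    -1 / μ ^ 2 ≤ 1 + μ * stdNormalPDF μ / T μ - (stdNormalPDF μ / T μ) ^ 2 ∧
      1 + μ * stdNormalPDF μ / T μ - (stdNormalPDF μ / T μ) ^ 2 ≤ 2 / (μ ^ 2 + 2) := by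
  have hμ0 : (0:ℝ) < μ := by linarith
  have hn : 0 < stdNormalPDF μ := pdf_pos μ
  have hlow := T_lower μ hμ0
  have hup := T_upper μ hμ0
  set n := stdNormalPDF μ with hn'
  set t := T μ with ht'
  have ht : 0 < t := lt_of_lt_of_le (by positivity) hlow
  have hd1 : (0:ℝ) < μ ^ 2 + 1 := by positivity
  have hd3 : (0:ℝ) < μ ^ 3 + 3 * μ := by positivity
  -- division-free forms of the bounds
  have hA : n * μ ≤ t * (μ ^ 2 + 1) := by
    have h := mul_le_mul_of_nonneg_right hlow (le_of_lt hd1)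
    rw [mul_assoc, div_mul_cancel₀ _ (ne_of_gt hd1)] at h
    linarith
  have hB : t * (μ ^ 3 + 3 * μ) ≤ n * (μ ^ 2 + 2) := by
    have h := mul_le_mul_of_nonneg_right hup (le_of_lt hd3)
    rw [mul_assoc, div_mul_cancel₀ _ (ne_of_gt hd3)] at h
    linarith
  set r := n / t with hr'
  have hU : r * μ ≤ μ ^ 2 + 1 := by
    rw [hr', div_mul_eq_mul_div, div_le_iff₀ ht]
    nlinarith
  have hL : μ ^ 3 + 3 * μ ≤ r * (μ ^ 2 + 2) := by
    rw [hr', div_mul_eq_mul_div, le_div_iff₀ ht]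
    nlinarith
  have hμr : μ ≤ r := by nlinarith
  have hrw1 : μ * n / t = μ * r := by rw [hr']; ring
  rw [hrw1]
  constructor
  · rw [div_le_iff₀ (by positivity : (0:ℝ) < μ ^ 2)]
    have k1 : μ * r ≤ μ ^ 2 + 1 := by linarith [hU]
    have k2 : μ * r - μ ^ 2 ≤ 1 := by nlinarith
    have k3 : 0 ≤ μ * r - μ ^ 2 := by nlinarith
    have k4 : (μ * r) * (μ * r - μ ^ 2) ≤ (μ ^ 2 + 1) * 1 :=
      mul_le_mul k1 k2 k3 (by positivity)
    nlinarith
  · rw [le_div_iff₀ (by positivity : (0:ℝ) < μ ^ 2 + 2)]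
    have hs : 0 ≤ r * (μ ^ 2 + 2) - (μ ^ 3 + 3 * μ) := by linarith
    nlinarith [mul_nonneg hs (by positivity : (0:ℝ) ≤ μ ^ 3 + 4 * μ),
      sq_nonneg (r * (μ ^ 2 + 2) - (μ ^ 3 + 3 * μ)), sq_nonneg μ,
      mul_nonneg hs hs]

end NCVAux

/-- The conditional variance of a standard normal above a threshold,
`1 + μ n(μ)/(1−N(μ)) − n(μ)²/(1−N(μ))²`, tends to `0` as `μ → ∞`. -/
theorem normal_conditional_variance_tendsto_zero :
    Tendsto (fun μ : ℝ =>
        1 + μ * stdNormalPDF μ / (1 - stdNormalCDF μ) -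
          (stdNormalPDF μ / (1 - stdNormalCDF μ)) ^ 2)
      atTop (nhds 0) := by
  have hlo : Tendsto (fun μ : ℝ => -1 / μ ^ 2) atTop (nhds 0) := by
    have h := (tendsto_pow_atTop (two_ne_zero)).inv_tendsto_atTop (α := ℝ)
    have h2 := h.neg
    rw [neg_zero] at h2
    apply h2.congr
    intro x
    simp [Pi.inv_apply, neg_div]
  have hhi : Tendsto (fun μ : ℝ => 2 / (μ ^ 2 + 2)) atTop (nhds 0) := by
    have h : Tendsto (fun μ : ℝ => μ ^ 2 + 2) atTop atTop :=
      tendsto_atTop_add_const_right _ 2 (tendsto_pow_atTop (two_ne_zero))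
    have h2 := (h.inv_tendsto_atTop).const_mul (2:ℝ)
    rw [mul_zero] at h2
    apply h2.congr
    intro x
    simp [Pi.inv_apply, div_eq_mul_inv]
  apply tendsto_of_tendsto_of_tendsto_of_le_of_le' hlo hhi
  · filter_upwards [eventually_ge_atTop (1:ℝ)] with μ hμ
    rw [NCVAux.one_sub_cdf]
    exact (NCVAux.main_bounds μ hμ).1
  · filter_upwards [eventually_ge_atTop (1:ℝ)] with μ hμ
    rw [NCVAux.one_sub_cdf]
    exact (NCVAux.main_bounds μ hμ).2
end

section
/- For a standard normal X and all μ > 0, the conditional variance satisfies 0 < Var[X | X > μ] < 1. -/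
open MeasureTheory Real Set

section Aux
open Filter

lemma pdf_eq (x : ℝ) : stdNormalPDF x = (1 / Real.sqrt (2 * π)) * Real.exp (-(1/2 : ℝ) * x ^ 2) := by
  unfold stdNormalPDF; ring_nf

lemma pdf_pos (x : ℝ) : 0 < stdNormalPDF x := by
  unfold stdNormalPDF
  positivity

lemma pdf_integrable : Integrable stdNormalPDF := by
  have : Integrable (fun x : ℝ => Real.exp (-(1/2 : ℝ) * x ^ 2)) := integrable_exp_neg_mul_sq (by norm_num)
  have h := this.const_mul (1 / Real.sqrt (2 * π))
  refine h.congr (Eventually.of_forall fun x => ?_)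
  rw [pdf_eq]

lemma pdf_integral : ∫ x, stdNormalPDF x = 1 := by
  have h : ∫ x : ℝ, Real.exp (-(1/2 : ℝ) * x ^ 2) = Real.sqrt (π / (1/2)) := integral_gaussian (1/2)
  calc ∫ x, stdNormalPDF x = ∫ x : ℝ, (1 / Real.sqrt (2 * π)) * Real.exp (-(1/2 : ℝ) * x ^ 2) := by
        simp_rw [pdf_eq]
    _ = (1 / Real.sqrt (2 * π)) * ∫ x : ℝ, Real.exp (-(1/2 : ℝ) * x ^ 2) := integral_const_mul _ _
    _ = (1 / Real.sqrt (2 * π)) * Real.sqrt (π / (1/2)) := by rw [h]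
    _ = 1 := by
        rw [show π / (1/2 : ℝ) = 2 * π by ring, one_div, inv_mul_cancel₀ (by positivity)]

lemma pdf_continuous : Continuous stdNormalPDF := by
  unfold stdNormalPDF
  fun_prop

lemma hasDerivAt_pdf (x : ℝ) : HasDerivAt stdNormalPDF (-x * stdNormalPDF x) x := by
  have h1 : HasDerivAt (fun y : ℝ => -y ^ 2 / 2) (-x) x := by
    have := ((hasDerivAt_pow 2 x).neg).div_const 2
    simpa using this.congr_deriv (by ring)
  have h2 := (h1.exp).const_mul (1 / Real.sqrt (2 * π))
  unfold stdNormalPDF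
  refine h2.congr_deriv ?_
  ring

lemma hasDerivAt_cdf (x : ℝ) : HasDerivAt stdNormalCDF (stdNormalPDF x) x := by
  have key : stdNormalCDF = fun b => stdNormalCDF 0 + ∫ t in (0:ℝ)..b, stdNormalPDF t := by
    funext b
    have := intervalIntegral.integral_Iic_sub_Iic (a := 0) (b := b) (f := stdNormalPDF)
      (μ := volume) pdf_integrable.integrableOn pdf_integrable.integrableOn
    unfold stdNormalCDF
    linarith
  rw [key]
  have : HasDerivAt (fun b => ∫ t in (0:ℝ)..b, stdNormalPDF t) (stdNormalPDF x) x :=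
    intervalIntegral.integral_hasDerivAt_right pdf_integrable.intervalIntegrable
      pdf_continuous.aestronglyMeasurable.stronglyMeasurableAtFilter pdf_continuous.continuousAt
  exact this.const_add _

lemma cdf_add_tail (μ : ℝ) : stdNormalCDF μ + ∫ x in Ioi μ, stdNormalPDF x = 1 := by
  rw [← pdf_integral]
  exact (intervalIntegral.integral_Iic_add_Ioi pdf_integrable.integrableOn pdf_integrable.integrableOn)

lemma tail_pos (μ : ℝ) : 0 < 1 - stdNormalCDF μ := by
  have h := cdf_add_tail μ
  have : (0:ℝ) < ∫ x in Ioi μ, stdNormalPDF x := by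
    refine (setIntegral_pos_iff_support_of_nonneg_ae ?_ pdf_integrable.integrableOn).2 ?_
    · exact Eventually.of_forall fun x => (pdf_pos x).le
    · have : Function.support stdNormalPDF = univ := by
        ext x; simp [(pdf_pos x).ne']
      rw [this, univ_inter]
      simp [Real.volume_Ioi]
  linarith

lemma tendsto_pdf : Tendsto stdNormalPDF atTop (nhds 0) := by
  have h1 : Tendsto (fun x : ℝ => -x ^ 2 / 2) atTop atBot := by
    apply Tendsto.atBot_div_const (by norm_num)
    exact tendsto_neg_atBot_iff.2 (tendsto_pow_atTop (by norm_num))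
  have h2 : Tendsto (fun x : ℝ => Real.exp (-x ^ 2 / 2)) atTop (nhds 0) :=
    Real.tendsto_exp_atBot.comp h1
  have h3 := h2.const_mul (1 / Real.sqrt (2 * π))
  rw [mul_zero] at h3
  exact h3

lemma tendsto_tail : Tendsto (fun μ => ∫ x in Ioi μ, stdNormalPDF x) atTop (nhds 0) := by
  have h := tendsto_setIntegral_of_antitone (f := stdNormalPDF) (μ := volume)
    (s := fun μ : ℝ => Ioi μ) (fun i => measurableSet_Ioi)
    (fun a b hab => Ioi_subset_Ioi hab) ⟨0, pdf_integrable.integrableOn⟩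
  have he : ⋂ n : ℝ, Ioi n = (∅ : Set ℝ) := by
    ext x; simp only [mem_iInter, mem_Ioi, mem_empty_iff_false, iff_false, not_forall, not_lt]
    exact ⟨x, le_rfl⟩
  rw [he] at h
  simpa using h


lemma tendsto_one_sub_cdf : Tendsto (fun μ => 1 - stdNormalCDF μ) atTop (nhds 0) := by
  have := tendsto_tail
  refine this.congr fun μ => ?_
  have := cdf_add_tail μ; linarith

-- Upper Mills: μ * (1 - N μ) < n μ for μ > 0
lemma mills_upper {μ : ℝ} (hμ : 0 < μ) : μ * (1 - stdNormalCDF μ) < stdNormalPDF μ := by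
  set G : ℝ → ℝ := fun x => (1 - stdNormalCDF x) - stdNormalPDF x / x with hG
  have hderiv : ∀ x ∈ interior (Ioi (0:ℝ)), HasDerivAt G (stdNormalPDF x / x ^ 2) x := by
    intro x hx
    rw [interior_Ioi] at hx
    have hx0 : x ≠ 0 := ne_of_gt hx
    have h1 : HasDerivAt (fun y => 1 - stdNormalCDF y) (-stdNormalPDF x) x :=
      ((hasDerivAt_cdf x).const_sub 1).congr_deriv (by ring)
    have h2 : HasDerivAt (fun y => stdNormalPDF y / y)
        ((-x * stdNormalPDF x * x - stdNormalPDF x * 1) / x ^ 2) x :=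
      (hasDerivAt_pdf x).div (hasDerivAt_id x) hx0
    have := h1.sub h2
    refine this.congr_deriv ?_
    field_simp
    ring
  have hmono : StrictMonoOn G (Ioi 0) := by
    apply strictMonoOn_of_hasDerivWithinAt_pos (convex_Ioi 0)
      (fun x hx => ((hderiv x (by rwa [interior_Ioi])).hasDerivWithinAt).continuousWithinAt)
      (fun x hx => (hderiv x hx).hasDerivWithinAt)
    intro x hx
    rw [interior_Ioi] at hx
    exact div_pos (pdf_pos x) (pow_pos hx 2)
  have hlim : Tendsto G atTop (nhds 0) := by
    have h2 : Tendsto (fun x => stdNormalPDF x / x) atTop (nhds 0) :=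
      Tendsto.div_atTop tendsto_pdf tendsto_id
    simpa using tendsto_one_sub_cdf.sub h2
  have key : G μ < 0 := by
    have h1 : G μ < G (μ + 1) := hmono hμ (by simp; linarith) (by linarith)
    have h2 : G (μ + 1) ≤ 0 := by
      refine ge_of_tendsto hlim ?_
      filter_upwards [eventually_gt_atTop (μ + 1)] with x hx
      exact (hmono (by simp; linarith) (by simp; linarith [hx]) hx).le
    linarith
  have hGμ : (1 - stdNormalCDF μ) - stdNormalPDF μ / μ < 0 := key
  rw [sub_neg] at hGμ
  calc μ * (1 - stdNormalCDF μ) < μ * (stdNormalPDF μ / μ) := by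
        exact (mul_lt_mul_iff_right₀ hμ).2 hGμ
    _ = stdNormalPDF μ := by field_simp

noncomputable def millsG (x : ℝ) : ℝ := (Real.sqrt (x ^ 2 + 4) - x) / 2

lemma millsG_pos (x : ℝ) : 0 < millsG x := by
  unfold millsG
  have : x < Real.sqrt (x ^ 2 + 4) := by
    rcases le_or_gt x 0 with h | h
    · exact h.trans_lt (Real.sqrt_pos.2 (by positivity))
    · have := Real.sq_sqrt (show (0:ℝ) ≤ x ^ 2 + 4 by positivity)
      nlinarith [Real.sqrt_nonneg (x ^ 2 + 4)]
  linarith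

lemma millsG_root (x : ℝ) : millsG x ^ 2 + x * millsG x - 1 = 0 := by
  unfold millsG
  have hs2 := Real.sq_sqrt (show (0:ℝ) ≤ x ^ 2 + 4 by positivity)
  linear_combination (1/4 : ℝ) * hs2

lemma hasDerivAt_millsG (x : ℝ) :
    HasDerivAt millsG ((x / Real.sqrt (x ^ 2 + 4) - 1) / 2) x := by
  have hpos : (0:ℝ) < x ^ 2 + 4 := by positivity
  have h1 : HasDerivAt (fun y : ℝ => y ^ 2 + 4) (2 * x) x := by
    simpa using (hasDerivAt_pow 2 x).add_const 4
  have h2 : HasDerivAt (fun y : ℝ => Real.sqrt (y ^ 2 + 4))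
      (2 * x / (2 * Real.sqrt (x ^ 2 + 4))) x := by
    have := (Real.hasDerivAt_sqrt hpos.ne').comp x h1
    simpa [mul_comm, div_eq_mul_inv, Function.comp_def] using this.congr_deriv (by ring)
  have h3 := (h2.sub (hasDerivAt_id x)).div_const 2
  unfold millsG
  refine h3.congr_deriv ?_
  have hs : Real.sqrt (x ^ 2 + 4) ≠ 0 := (Real.sqrt_pos.2 hpos).ne'
  field_simp

lemma millsG_key (x : ℝ) :
    x * millsG x - (x / Real.sqrt (x ^ 2 + 4) - 1) / 2 - 1 < 0 := by
  set s := Real.sqrt (x ^ 2 + 4) with hs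
  have hspos : 0 < s := Real.sqrt_pos.2 (by positivity)
  have hs2 : s ^ 2 = x ^ 2 + 4 := Real.sq_sqrt (by positivity)
  have key : x ^ 3 + 3 * x < s * (x ^ 2 + 1) := by
    rcases le_or_gt x 0 with h | h
    · nlinarith
    · have h1 : (x ^ 3 + 3 * x) ^ 2 < (s * (x ^ 2 + 1)) ^ 2 := by nlinarith
      nlinarith [mul_pos hspos (show (0:ℝ) < x ^ 2 + 1 by positivity)]
  unfold millsG
  rw [← hs]
  have expand : x * ((s - x) / 2) - (x / s - 1) / 2 - 1
      = (x * s ^ 2 - x ^ 2 * s - x + s - 2 * s) / (2 * s) := by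
    field_simp
    ring
  rw [expand]
  apply div_neg_of_neg_of_pos _ (by positivity)
  have hxs : x * s ^ 2 = x ^ 3 + 4 * x := by rw [hs2]; ring
  linarith [key, hxs]

-- Lower Mills: n μ * millsG μ < 1 - N μ  (for all μ)
lemma mills_lower (μ : ℝ) : stdNormalPDF μ * millsG μ < 1 - stdNormalCDF μ := by
  set F : ℝ → ℝ := fun x => (1 - stdNormalCDF x) - stdNormalPDF x * millsG x with hF
  have hderiv : ∀ x, HasDerivAt F
      (stdNormalPDF x * (x * millsG x - (x / Real.sqrt (x ^ 2 + 4) - 1) / 2 - 1)) x := by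
    intro x
    have h1 : HasDerivAt (fun y => 1 - stdNormalCDF y) (-stdNormalPDF x) x :=
      ((hasDerivAt_cdf x).const_sub 1).congr_deriv (by ring)
    have h2 := (hasDerivAt_pdf x).mul (hasDerivAt_millsG x)
    refine (h1.sub h2).congr_deriv ?_
    ring
  have hanti : StrictAnti F := by
    apply strictAnti_of_deriv_neg
    intro x
    rw [(hderiv x).deriv]
    exact mul_neg_of_pos_of_neg (pdf_pos x) (millsG_key x)
  have hlim : Tendsto F atTop (nhds 0) := by
    have hng : Tendsto (fun x => stdNormalPDF x * millsG x) atTop (nhds 0) := by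
      apply squeeze_zero' (g := stdNormalPDF)
      · filter_upwards with x
        exact (mul_pos (pdf_pos x) (millsG_pos x)).le
      · filter_upwards [eventually_ge_atTop (0:ℝ)] with x hx
        have hg1 : millsG x ≤ 1 := by
          unfold millsG
          have h2 : Real.sqrt (x ^ 2 + 4) ≤ x + 2 := by
            rw [show x ^ 2 + 4 = (x+2)^2 - 4*x by ring]
            calc Real.sqrt ((x+2)^2 - 4*x) ≤ Real.sqrt ((x+2)^2) :=
                  Real.sqrt_le_sqrt (by nlinarith)
              _ = x + 2 := Real.sqrt_sq (by linarith)
          linarith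
        calc stdNormalPDF x * millsG x ≤ stdNormalPDF x * 1 :=
              mul_le_mul_of_nonneg_left hg1 (pdf_pos x).le
          _ = stdNormalPDF x := mul_one _
      · exact tendsto_pdf
    simpa using tendsto_one_sub_cdf.sub hng
  have h1 : F (μ + 1) ≥ 0 := by
    refine le_of_tendsto hlim ?_
    filter_upwards [eventually_gt_atTop (μ + 1)] with x hx
    exact (hanti hx).le
  have h2 : F μ > F (μ + 1) := hanti (by linarith)
  have : F μ > 0 := lt_of_le_of_lt h1 h2
  simpa [hF, sub_pos] using this

end Aux

/-- For all `μ > 0` the conditional variance of a standard normal above `μ`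
is strictly between `0` and `1`. -/
theorem normal_conditional_variance_bounds (μ : ℝ) (hμ : 0 < μ) :
    0 < 1 + μ * stdNormalPDF μ / (1 - stdNormalCDF μ) -
        (stdNormalPDF μ / (1 - stdNormalCDF μ)) ^ 2 ∧
      1 + μ * stdNormalPDF μ / (1 - stdNormalCDF μ) -
        (stdNormalPDF μ / (1 - stdNormalCDF μ)) ^ 2 < 1 := by
  set n := stdNormalPDF μ with hn
  set D := 1 - stdNormalCDF μ with hD
  have hDpos : 0 < D := tail_pos μ
  have hnpos : 0 < n := pdf_pos μ
  have hupper : μ * D < n := mills_upper hμ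
  have hlowerm : n * millsG μ < D := mills_lower μ
  have hg : millsG μ ^ 2 + μ * millsG μ - 1 = 0 := millsG_root μ
  have hgpos : 0 < millsG μ := millsG_pos μ
  have heq : 1 + μ * n / D - (n / D) ^ 2 = (D ^ 2 + μ * n * D - n ^ 2) / D ^ 2 := by
    field_simp
  constructor
  · rw [heq]
    apply div_pos _ (pow_pos hDpos 2)
    have h1 : (n * millsG μ) ^ 2 < D ^ 2 :=
      pow_lt_pow_left₀ hlowerm (mul_pos hnpos hgpos).le (by norm_num)
    have h2 : μ * n * (n * millsG μ) < μ * n * D :=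
      mul_lt_mul_of_pos_left hlowerm (mul_pos hμ hnpos)
    have h3 : (n * millsG μ) ^ 2 + μ * n * (n * millsG μ) - n ^ 2 = 0 := by
      linear_combination n ^ 2 * hg
    linarith
  · rw [heq]
    rw [div_lt_one (pow_pos hDpos 2)]
    nlinarith
end
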